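/- (Troesch's isoperimetric inequality for sloshing, discussed in the paper) Let r₀ > 0, let h ∈ C¹([0, r₀]) satisfy h > 0 on [0, r₀) and h(r₀) = 0, and let W = {(x, y, z) ∈ ℝ³ : x² + z² < r₀², −h(√(x² + z²)) < y < 0} be the axially symmetric container lying strictly below the free surface disk F = {x² + z² < r₀²}. Then the fundamental sloshing eigenvalue satisfies ν₁(W) ≤ (8/r₀⁴) ∫₀^{r₀} h(r) r dr, and equality occurs for the parabolic bottom h_iso(r) = ν₁(W) (r₀² − r²)/2. -/

import Mathlib

open MeasureTheory Set
open scoped RealInnerProductSpace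

noncomputable section

abbrev Plane : Type := EuclideanSpace ℝ (Fin 2)
abbrev Space3 : Type := EuclideanSpace ℝ (Fin 3)

/-- The point of `ℝ³` with horizontal coordinates `q` and vertical coordinate `y`. -/
def emb (q : Plane) (y : ℝ) : Space3 :=
  (EuclideanSpace.equiv (Fin 3) ℝ).symm ![q 0, q 1, y]

/-- The horizontal projection of a point of `ℝ³`. -/
def horiz (p : Space3) : Plane :=
  (EuclideanSpace.equiv (Fin 2) ℝ).symm ![p 0, p 1]

/-- The finite-depth vertical cylinder `F × (-d, 0)`. -/
def cylinder (F : Set Plane) (d : ℝ) : Set Space3 :=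
  {p | horiz p ∈ F ∧ p 2 ∈ Ioo (-d) 0}

/-- The infinitely deep vertical cylinder `F × (-∞, 0)`. -/
def deepCylinder (F : Set Plane) : Set Space3 :=
  {p | horiz p ∈ F ∧ p 2 < 0}

/-- The free surface `F × {0}` as a subset of `ℝ³`. -/
def freeSurface (F : Set Plane) : Set Space3 :=
  {p | horiz p ∈ F ∧ p 2 = 0}

/-- A (bounded) Lipschitz domain: an open connected nonempty set satisfying the
uniform interior cone condition near every boundary point. -/
def IsLipschitzDomain {E : Type*} [NormedAddCommGroup E] [NormedSpace ℝ E] (Ω : Set E) : Prop :=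
  IsOpen Ω ∧ Ω.Nonempty ∧ IsConnected Ω ∧
    ∀ x ∈ frontier Ω, ∃ e : E, ‖e‖ = 1 ∧ ∃ ε δ : ℝ, 0 < ε ∧ 0 < δ ∧
      ∀ y ∈ Metric.ball x δ ∩ closure Ω, ∀ t : ℝ, 0 < t → t < δ →
        ∀ v : E, ‖v‖ < ε * t → y + t • e + v ∈ Ω

/-- The Rayleigh quotient of the sloshing problem. -/
def sloshRayleigh (W : Set Space3) (F : Set Plane) (φ : Space3 → ℝ) : ℝ :=
  (∫ p in W, ‖fderiv ℝ φ p‖ ^ 2) / (∫ q in F, (φ (emb q 0)) ^ 2)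

/-- Membership in the variational space of the sloshing problem: an `H¹(W)` function
(modelled by a `C¹` function with finite `H¹` norm on `W`) whose trace on the free
surface `F × {0}` is square integrable with mean zero. -/
def sloshTestFun (W : Set Space3) (F : Set Plane) (φ : Space3 → ℝ) : Prop :=
  ContDiff ℝ 1 φ ∧
  IntegrableOn (fun p => (φ p) ^ 2) W ∧
  IntegrableOn (fun p => ‖fderiv ℝ φ p‖ ^ 2) W ∧
  IntegrableOn (fun q => φ (emb q 0)) F ∧
  IntegrableOn (fun q => (φ (emb q 0)) ^ 2) F ∧
  (∫ q in F, φ (emb q 0)) = 0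

/-- Admissible test function for the fundamental sloshing eigenvalue. -/
def sloshAdmissible (W : Set Space3) (F : Set Plane) (φ : Space3 → ℝ) : Prop :=
  sloshTestFun W F φ ∧ 0 < ∫ q in F, (φ (emb q 0)) ^ 2

/-- The fundamental sloshing eigenvalue `ν₁` of a container `W` with free surface `F`. -/
def sloshNu1 (W : Set Space3) (F : Set Plane) : ℝ :=
  sInf {r | ∃ φ : Space3 → ℝ, sloshAdmissible W F φ ∧ r = sloshRayleigh W F φ}

/-- The first nonzero Neumann eigenvalue `μ₁` of a planar domain `F`. -/
def neumannMu1 (F : Set Plane) : ℝ :=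
  sInf {r | ∃ u : Plane → ℝ, ContDiff ℝ 1 u ∧
    IntegrableOn u F ∧ IntegrableOn (fun q => (u q) ^ 2) F ∧
    IntegrableOn (fun q => ‖fderiv ℝ u q‖ ^ 2) F ∧
    (∫ q in F, u q) = 0 ∧ 0 < ∫ q in F, (u q) ^ 2 ∧
    r = (∫ q in F, ‖fderiv ℝ u q‖ ^ 2) / (∫ q in F, (u q) ^ 2)}

/-- The perimeter of a planar set: the one-dimensional Hausdorff measure of its boundary. -/
def perim (F : Set Plane) : ℝ := (μH[1] (frontier F)).toReal

/-- A reflection of the Euclidean plane in a line: an isometric involution which fixes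
at least two points but is not the identity. -/
def IsLineReflection (f : Plane ≃ᵃⁱ[ℝ] Plane) : Prop :=
  (∀ p, f (f p) = p) ∧ (∃ p q : Plane, p ≠ q ∧ f p = p ∧ f q = q) ∧ (∃ p, f p ≠ p)

/-- `F` has (at least) two axes of symmetry. -/
def HasTwoSymmetryAxes (F : Set Plane) : Prop :=
  ∃ f g : Plane ≃ᵃⁱ[ℝ] Plane, IsLineReflection f ∧ IsLineReflection g ∧
    f '' F = F ∧ g '' F = F ∧ f ≠ g

/-- A container with vertical side walls over the free surface `F`: either the
infinitely deep cylinder `F × (-∞, 0)`, or the finite-depth cylinder `F × (-d, 0)`,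
or more generally a bounded Lipschitz domain contained in some `F × (-d, 0)` whose
boundary contains `F × {0}`. -/
def IsVerticalContainer (F : Set Plane) (W : Set Space3) : Prop :=
  W = deepCylinder F ∨ (∃ d : ℝ, 0 < d ∧ W = cylinder F d) ∨
    (∃ d : ℝ, 0 < d ∧ Bornology.IsBounded W ∧ IsLipschitzDomain W ∧
      W ⊆ cylinder F d ∧ freeSurface F ⊆ frontier W)

/-- `F` is, up to a rigid motion and scaling, an open square. -/
def IsSquareShape (F : Set Plane) : Prop :=
  ∃ a : ℝ, 0 < a ∧ ∃ f : Plane ≃ᵃⁱ[ℝ] Plane,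
    F = f '' {p : Plane | p 0 ∈ Ioo 0 a ∧ p 1 ∈ Ioo 0 a}

/-- `F` is, up to a rigid motion and scaling, an open equilateral triangle. -/
def IsEquilateralTriangleShape (F : Set Plane) : Prop :=
  ∃ p q r : Plane, p ≠ q ∧ dist p q = dist q r ∧ dist q r = dist r p ∧
    F = interior (convexHull ℝ {p, q, r})

/-!
Test the Rayleigh quotient with the horizontal coordinate `φ(x, y, z) = x`. Its gradient has unit
length, so the numerator is `vol W = ∫_F h(|q|) dq = 2π ∫₀^{r₀} h(r) r dr`; its trace has mean zero
on the disk by symmetry, and `∫_F x² = ½ ∫_F |q|² = π r₀⁴ / 4`. For the parabolic profile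
`h = ν (r₀² - r²) / 2` the bound `(8 / r₀⁴) ∫₀^{r₀} h(r) r dr` evaluates to `ν` itself.
-/

open Metric Real

theorem setIntegral_ball_fun_norm {E F : Type*} [NormedAddCommGroup E] [NormedSpace ℝ E]
    [Nontrivial E] [FiniteDimensional ℝ E] [MeasurableSpace E] [BorelSpace E]
    [NormedAddCommGroup F] [NormedSpace ℝ F] (μ : Measure E) [μ.IsAddHaarMeasure]
    (f : ℝ → F) (R : ℝ) :
    ∫ x in ball (0 : E) R, f ‖x‖ ∂μ = Module.finrank ℝ E • μ.real (ball 0 1) •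
      ∫ y in Ioo 0 R, y ^ (Module.finrank ℝ E - 1) • f y := by
  have hball : ∫ x in ball (0 : E) R, f ‖x‖ ∂μ = ∫ x, (Iio R).indicator f ‖x‖ ∂μ := by
    rw [← integral_indicator measurableSet_ball]
    congr 1; ext x; simp [indicator]
  rw [hball, integral_fun_norm_addHaar, ← Ioi_inter_Iio, ← setIntegral_indicator measurableSet_Iio]
  congr 3; ext y; simp [indicator]

section BallSymmetry

variable {ι F : Type*} [Fintype ι] [NormedAddCommGroup F] [NormedSpace ℝ F]

theorem setIntegral_ball_comp_linearIsometryEquiv {E : Type*} [NormedAddCommGroup E]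
    [InnerProductSpace ℝ E] [FiniteDimensional ℝ E] [MeasurableSpace E] [BorelSpace E]
    (σ : E ≃ₗᵢ[ℝ] E) (f : E → F) (R : ℝ) :
    ∫ x in ball (0 : E) R, f (σ x) = ∫ x in ball 0 R, f x := by
  have h := σ.measurePreserving.setIntegral_preimage_emb σ.toHomeomorph.measurableEmbedding f
    (ball 0 R)
  rwa [show σ ⁻¹' ball 0 R = ball 0 R by ext x; simp] at h

theorem setIntegral_ball_coord_eq_zero (i : ι) (R : ℝ) :
    ∫ x in ball (0 : EuclideanSpace ℝ ι) R, x i = 0 := by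
  have h := setIntegral_ball_comp_linearIsometryEquiv (LinearIsometryEquiv.neg ℝ)
    (fun x : EuclideanSpace ℝ ι => x i) R
  simp only [LinearIsometryEquiv.coe_neg, PiLp.neg_apply, integral_neg] at h
  linarith

theorem setIntegral_ball_comp_coord_swap (g : ℝ → F) (i j : ι) (R : ℝ) :
    ∫ x in ball (0 : EuclideanSpace ℝ ι) R, g (x i) =
      ∫ x in ball (0 : EuclideanSpace ℝ ι) R, g (x j) := by
  classical
  rw [← setIntegral_ball_comp_linearIsometryEquiv
    (LinearIsometryEquiv.piLpCongrLeft 2 ℝ ℝ (Equiv.swap i j))]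
  congr 1; funext x
  simp [LinearIsometryEquiv.piLpCongrLeft_apply, Equiv.piCongrLeft'_apply]

end BallSymmetry

theorem ContinuousOn.integrableOn_of_isBounded {X E : Type*} [MetricSpace X] [ProperSpace X]
    [MeasurableSpace X] [OpensMeasurableSpace X] {μ : Measure X} [IsFiniteMeasureOnCompacts μ]
    [NormedAddCommGroup E] {f : X → E} {s : Set X} (hs : Bornology.IsBounded s)
    (hf : ContinuousOn f (closure s)) : IntegrableOn f s μ :=
  (hf.integrableOn_compact hs.isCompact_closure).mono_set subset_closure

theorem setIntegral_disk_fun_norm (f : ℝ → ℝ) {R : ℝ} (hR : 0 ≤ R) :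
    ∫ q in ball (0 : Plane) R, f ‖q‖ = 2 * π * ∫ r in 0..R, f r * r := by
  have hunit : volume.real (ball (0 : Plane) 1) = π := by
    simp [measureReal_def, pi_nonneg]
  rw [setIntegral_ball_fun_norm, finrank_euclideanSpace_fin, hunit,
    intervalIntegral.integral_of_le hR, integral_Ioc_eq_integral_Ioo]
  simp only [nsmul_eq_mul, smul_eq_mul, Nat.cast_ofNat, Nat.add_one_sub_one, pow_one,
    mul_comm _ (f _), mul_assoc]

theorem setIntegral_disk_coord_sq {R : ℝ} (hR : 0 ≤ R) :
    ∫ q in ball (0 : Plane) R, q 0 ^ 2 = π * R ^ 4 / 4 := by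
  have hint : ∀ i : Fin 2, IntegrableOn (fun q : Plane => q i ^ 2) (ball 0 R) := fun i =>
    ContinuousOn.integrableOn_of_isBounded isBounded_ball (by fun_prop)
  have hsum : ∫ q in ball (0 : Plane) R, (q 0 ^ 2 + q 1 ^ 2) = π * R ^ 4 / 2 := by
    have hnorm : ∀ q : Plane, q 0 ^ 2 + q 1 ^ 2 = ‖q‖ ^ 2 := fun q => by
      simp [EuclideanSpace.real_norm_sq_eq, Fin.sum_univ_two]
    simp only [hnorm]
    rw [setIntegral_disk_fun_norm (· ^ 2) hR]
    simp only [← pow_succ, integral_pow]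
    norm_num
    ring
  rw [integral_add (hint 0) (hint 1), setIntegral_ball_comp_coord_swap (· ^ 2) 1 0] at hsum
  linarith

theorem integral_parabolic_profile (c R : ℝ) :
    ∫ r in 0..R, c * (R ^ 2 - r ^ 2) / 2 * r = c * R ^ 4 / 8 := by
  have hpoly : (fun r => c * (R ^ 2 - r ^ 2) / 2 * r) =
      fun r => c * R ^ 2 / 2 * r - c / 2 * r ^ 3 := by
    funext r; ring
  rw [hpoly, intervalIntegral.integral_sub
    ((by fun_prop : Continuous fun r : ℝ => c * R ^ 2 / 2 * r).intervalIntegrable _ _)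
    ((by fun_prop : Continuous fun r : ℝ => c / 2 * r ^ 3).intervalIntegrable _ _),
    intervalIntegral.integral_const_mul, intervalIntegral.integral_const_mul, integral_id,
    integral_pow]
  ring

theorem continuous_horiz : Continuous horiz := by
  unfold horiz; fun_prop

theorem horiz_emb (q : Plane) (y : ℝ) : horiz (emb q y) = q := by
  ext i; fin_cases i <;> rfl

theorem emb_apply_two (q : Plane) (y : ℝ) : emb q y 2 = y := rfl

def embMeasurableEquiv : (Plane × ℝ) ≃ᵐ Space3 :=
  ((MeasurableEquiv.toLp 2 (Fin 2 → ℝ)).symm.prodCongr (MeasurableEquiv.refl ℝ)).trans <|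
    MeasurableEquiv.prodComm.trans <|
      (MeasurableEquiv.piFinSuccAbove (fun _ => ℝ) 2).symm.trans (MeasurableEquiv.toLp 2 _)

theorem embMeasurableEquiv_apply (z : Plane × ℝ) : embMeasurableEquiv z = emb z.1 z.2 := by
  ext i
  fin_cases i <;> rfl

theorem measurePreserving_embMeasurableEquiv : MeasurePreserving embMeasurableEquiv := by
  have hpi2 := (measurePreserving_piFinSuccAbove (fun _ : Fin 3 => (volume : Measure ℝ)) 2).symm
  rw [← volume_pi] at hpi2
  exact (PiLp.volume_preserving_toLp (Fin 3)).comp <| hpi2.comp <|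
    Measure.measurePreserving_swap.comp <|
      (EuclideanSpace.volume_preserving_symm_measurableEquiv_toLp (Fin 2)).prod
        (MeasurePreserving.id volume)

section FluidRegion

def fluidRegion (s : Set Plane) (g : Plane → ℝ) : Set Space3 :=
  {p | horiz p ∈ s ∧ -g (horiz p) < p 2 ∧ p 2 < 0}

variable {s : Set Plane} {g : Plane → ℝ}

theorem volume_fluidRegion (hs : MeasurableSet s) (hg : IntegrableOn g s)
    (hg0 : ∀ q ∈ s, 0 ≤ g q) :
    volume (fluidRegion s g) = ENNReal.ofReal (∫ q in s, g q) := by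
  have hpre : embMeasurableEquiv ⁻¹' fluidRegion s g = regionBetween (-g) (fun _ => 0) s := by
    ext ⟨q, y⟩
    simp only [mem_preimage, embMeasurableEquiv_apply, fluidRegion, regionBetween, mem_ofPred_eq,
      horiz_emb, emb_apply_two, mem_Ioo, Pi.neg_apply]
  rw [← measurePreserving_embMeasurableEquiv.measure_preimage_equiv, hpre,
    show (volume : Measure (Plane × ℝ)) = volume.prod volume from rfl,
    volume_regionBetween_eq_integral hg.neg integrableOn_zero hs fun q hq => by
      simpa using hg0 q hq]
  simp

theorem isOpen_fluidRegion (hs : IsOpen s) (hg : ContinuousOn g s) :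
    IsOpen (fluidRegion s g) := by
  have hdepth : ContinuousOn (fun p : Space3 => g (horiz p) + p 2) (horiz ⁻¹' s) :=
    (hg.comp continuous_horiz.continuousOn fun _ hp => hp).add (by fun_prop)
  have hopen :=
    hdepth.isOpen_inter_preimage (hs.preimage continuous_horiz) (isOpen_Ioi (a := 0))
  have hbelow : IsOpen {p : Space3 | p 2 < 0} := isOpen_lt (by fun_prop) continuous_const
  convert hopen.inter hbelow using 1
  ext p
  simp only [fluidRegion, mem_ofPred_eq, mem_inter_iff, mem_preimage, mem_Ioi]
  constructor
  · rintro ⟨hs, hdeep, hneg⟩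
    exact ⟨⟨hs, by linarith⟩, hneg⟩
  · rintro ⟨⟨hs, hdeep⟩, hneg⟩
    exact ⟨hs, by linarith, hneg⟩

end FluidRegion

theorem norm_fderiv_coord {ι : Type*} [Fintype ι] (i : ι) (x : EuclideanSpace ℝ ι) :
    ‖fderiv ℝ (fun y : EuclideanSpace ℝ ι => y i) x‖ = 1 := by
  classical
  rw [← EuclideanSpace.coe_proj ℝ, ContinuousLinearMap.fderiv]
  refine le_antisymm
    ((EuclideanSpace.proj (𝕜 := ℝ) i).opNorm_le_bound zero_le_one fun y => ?_) ?_
  · simpa using PiLp.norm_apply_le y i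
  · simpa [PiLp.norm_single] using
      (EuclideanSpace.proj (𝕜 := ℝ) i).le_opNorm (EuclideanSpace.single i 1)

theorem sloshNu1_le_sloshRayleigh {W : Set Space3} {F : Set Plane} {φ : Space3 → ℝ}
    (hφ : sloshAdmissible W F φ) : sloshNu1 W F ≤ sloshRayleigh W F φ := by
  refine csInf_le ⟨0, ?_⟩ ⟨φ, hφ, rfl⟩
  rintro _ ⟨ψ, hψ, rfl⟩
  exact div_nonneg (integral_nonneg fun _ => sq_nonneg _) hψ.2.le

section CoordinateTestFunction

variable {s : Set Plane} {g : Plane → ℝ} (hs : IsOpen s) (hsb : Bornology.IsBounded s)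
  (hg : ContinuousOn g (closure s)) (hg0 : ∀ q ∈ s, 0 ≤ g q)
include hs hsb hg hg0

theorem sloshAdmissible_coord_fluidRegion (hmean : ∫ q in s, q 0 = 0)
    (hvar : 0 < ∫ q in s, q 0 ^ 2) :
    sloshAdmissible (fluidRegion s g) s fun p => p 0 := by
  have hvol : volume (fluidRegion s g) ≠ ⊤ := by
    rw [volume_fluidRegion hs.measurableSet (hg.integrableOn_of_isBounded hsb) hg0]
    exact ENNReal.ofReal_ne_top
  have hmeas : MeasurableSet (fluidRegion s g) :=
    (isOpen_fluidRegion hs (hg.mono subset_closure)).measurableSet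
  obtain ⟨R, hR⟩ := hsb.subset_closedBall 0
  have hbound : ∀ p ∈ fluidRegion s g, ‖p 0 ^ 2‖ ≤ R ^ 2 := fun p hp => by
    have hx : ‖horiz p 0‖ ≤ R :=
      (PiLp.norm_apply_le (horiz p) 0).trans (mem_closedBall_zero_iff.1 (hR hp.1))
    rw [norm_pow]
    exact pow_le_pow_left₀ (norm_nonneg _) hx 2
  refine ⟨⟨contDiff_piLp_apply 2, ?_, ?_, ?_, ?_, hmean⟩, hvar⟩
  · exact Measure.integrableOn_of_bounded hvol (by fun_prop)
      (ae_restrict_of_forall_mem hmeas hbound)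
  · simp only [norm_fderiv_coord, one_pow]
    exact integrableOn_const hvol
  · exact ContinuousOn.integrableOn_of_isBounded (f := fun q : Plane => q 0) hsb (by fun_prop)
  · exact ContinuousOn.integrableOn_of_isBounded (f := fun q : Plane => q 0 ^ 2) hsb
      (by fun_prop)

theorem sloshRayleigh_coord_fluidRegion :
    sloshRayleigh (fluidRegion s g) s (fun p => p 0) = (∫ q in s, g q) / ∫ q in s, q 0 ^ 2 := by
  rw [sloshRayleigh]
  congr 1
  simp only [norm_fderiv_coord, one_pow, setIntegral_const, smul_eq_mul, mul_one, measureReal_def]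
  rw [volume_fluidRegion hs.measurableSet (hg.integrableOn_of_isBounded hsb) hg0,
    ENNReal.toReal_ofReal (setIntegral_nonneg hs.measurableSet hg0)]

theorem sloshNu1_fluidRegion_le (hmean : ∫ q in s, q 0 = 0) (hvar : 0 < ∫ q in s, q 0 ^ 2) :
    sloshNu1 (fluidRegion s g) s ≤ (∫ q in s, g q) / ∫ q in s, q 0 ^ 2 :=
  (sloshNu1_le_sloshRayleigh
    (sloshAdmissible_coord_fluidRegion hs hsb hg hg0 hmean hvar)).trans_eq
      (sloshRayleigh_coord_fluidRegion hs hsb hg hg0)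

end CoordinateTestFunction

theorem troesch_isoperimetric_general (r₀ : ℝ) (hr₀ : 0 < r₀) (h : ℝ → ℝ)
    (hC1 : ContDiffOn ℝ 1 h (Icc 0 r₀)) (hpos : ∀ r ∈ Ico (0:ℝ) r₀, 0 < h r)
    (F : Set Plane) (hF : F = Metric.ball (0 : Plane) r₀)
    (W : Set Space3)
    (hW : W = {p : Space3 | horiz p ∈ Metric.ball (0 : Plane) r₀ ∧
      -h ‖horiz p‖ < p 2 ∧ p 2 < 0}) :
    sloshNu1 W F ≤ (8 / r₀ ^ 4) * ∫ r in (0:ℝ)..r₀, h r * r ∧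
    ((∀ r ∈ Icc (0:ℝ) r₀, h r = sloshNu1 W F * (r₀ ^ 2 - r ^ 2) / 2) →
      sloshNu1 W F = (8 / r₀ ^ 4) * ∫ r in (0:ℝ)..r₀, h r * r) := by
  subst hF
  obtain rfl : W = fluidRegion (ball 0 r₀) fun q => h ‖q‖ := hW
  set ν := sloshNu1 (fluidRegion (ball 0 r₀) fun q => h ‖q‖) (ball 0 r₀)
  have hdepth : ContinuousOn (fun q : Plane => h ‖q‖) (closure (ball 0 r₀)) := by
    rw [closure_ball 0 hr₀.ne']
    exact hC1.continuousOn.comp continuous_norm.continuousOn fun q hq =>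
      ⟨norm_nonneg q, mem_closedBall_zero_iff.1 hq⟩
  have hdepth0 : ∀ q ∈ ball (0 : Plane) r₀, 0 ≤ h ‖q‖ := fun q hq =>
    (hpos _ ⟨norm_nonneg q, mem_ball_zero_iff.1 hq⟩).le
  have hvar := setIntegral_disk_coord_sq hr₀.le
  have hbound := sloshNu1_fluidRegion_le isOpen_ball isBounded_ball hdepth hdepth0
    (setIntegral_ball_coord_eq_zero 0 r₀) (by rw [hvar]; positivity)
  rw [setIntegral_disk_fun_norm _ hr₀.le, hvar] at hbound
  refine ⟨hbound.trans_eq (by field_simp; ring), fun hparabolic => ?_⟩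
  rw [intervalIntegral.integral_congr (g := fun r => ν * (r₀ ^ 2 - r ^ 2) / 2 * r) fun r hr => by
      rw [uIcc_of_le hr₀.le] at hr
      simp only [hparabolic r hr], integral_parabolic_profile]
  field_simp

/-- Troesch's isoperimetric inequality for sloshing. For an axially
symmetric container `W = {x² + z² < r₀², -h(√(x² + z²)) < y < 0}` below the free-surface
disk `F` of radius `r₀`, with bottom profile `h ∈ C¹([0, r₀])`, `h > 0` on `[0, r₀)` and
`h(r₀) = 0`, one has `ν₁(W) ≤ (8/r₀⁴) ∫₀^{r₀} h(r) r dr`, with equality for the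
parabolic bottom `h(r) = ν₁(W) (r₀² - r²)/2`. -/
theorem troesch_isoperimetric (r₀ : ℝ) (hr₀ : 0 < r₀) (h : ℝ → ℝ)
    (hC1 : ContDiffOn ℝ 1 h (Icc 0 r₀)) (hpos : ∀ r ∈ Ico (0:ℝ) r₀, 0 < h r)
    (hzero : h r₀ = 0) (F : Set Plane) (hF : F = Metric.ball (0 : Plane) r₀)
    (W : Set Space3)
    (hW : W = {p : Space3 | horiz p ∈ Metric.ball (0 : Plane) r₀ ∧
      -h ‖horiz p‖ < p 2 ∧ p 2 < 0}) :
    sloshNu1 W F ≤ (8 / r₀ ^ 4) * ∫ r in (0:ℝ)..r₀, h r * r ∧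
    ((∀ r ∈ Icc (0:ℝ) r₀, h r = sloshNu1 W F * (r₀ ^ 2 - r ^ 2) / 2) →
      sloshNu1 W F = (8 / r₀ ^ 4) * ∫ r in (0:ℝ)..r₀, h r * r) :=
  troesch_isoperimetric_general r₀ hr₀ h hC1 hpos F hF W hW
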